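/- arXiv:2605.21134 — 4 statements merged into one kernel-verified Lean document; each statement's English description precedes it below -/
import Mathlib

section
/- Let A an J be measurable subsets of S, and suppose sup_{s ∈ J} P_{δ_s}(σ_A < ∞) < 1, i.e., there exists γ < 1 such that for every s ∈ J the probability of returning to A is at most γ. Then for every initial probability measure μ on S, P_μ(Inf(J) ∩ Inf(A)) = 0; equivalently, P_μ-almost every trajectory that visits J infinitely often visits A only finitely often. -/
open MeasureTheory ProbabilityTheory Filter Set ENNReal

/-- The one-step shift on trajectories: `shift ω n = ω (n+1)`. -/
def shift {S : Type*} (ω : ℕ → S) : ℕ → S := fun n => ω (n + 1)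

/-- `Fin A`: the event of visiting `A` only finitely many times. -/
def finVisits {S : Type*} (A : Set S) : Set (ℕ → S) :=
  {ω | ∃ n, ∀ m, n ≤ m → ω m ∉ A}

/-- `Inf B`: the event of visiting `B` infinitely many times. -/
def infVisits {S : Type*} (B : Set S) : Set (ℕ → S) :=
  {ω | ∀ n, ∃ m, n ≤ m ∧ ω m ∈ B}

/-- `{σ_A < ∞}`: the event that the first return time to `A` is finite,
where `σ_A = 1 + τ_A ∘ shift`; equivalently `∃ n, ω (n+1) ∈ A`. -/
def retEvent {S : Type*} (A : Set S) : Set (ℕ → S) := {ω | ∃ n, ω (n + 1) ∈ A}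

/-- `I^ω`: the event of remaining in `I` forever. -/
def invEvent {S : Type*} (I : Set S) : Set (ℕ → S) := {ω | ∀ n, ω n ∈ I}

/-- Prepend a state to a trajectory. -/
def consTraj {S : Type*} (s : S) (ω : ℕ → S) : ℕ → S
  | 0 => s
  | n + 1 => ω n

/-- `T` is the Ionescu–Tulcea trajectory kernel of the time-homogeneous Markov chain with
transition kernel `P`: `T s` is the law on `S^ℕ` (with the product σ-algebra) of the
coordinate Markov chain with kernel `P` started at `s`.  It is uniquely characterised
(by the Ionescu–Tulcea theorem) by the one-step Markov recursion below: the trajectory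
from `s` is `s` followed by a trajectory started from a `P s`-distributed state.
The trajectory measure `P_ξ` with initial distribution `ξ` is then `ξ.bind (fun s => T s)`,
and `P_{δ_s} = T s`. -/
def IsTrajKernel {S : Type*} [MeasurableSpace S] (P : Kernel S S)
    (T : Kernel S (ℕ → S)) : Prop :=
  ∀ s : S, (T s : Measure (ℕ → S)) =
    ((P s : Measure S).bind (fun u => (T u : Measure (ℕ → S)))).map (consTraj s)

section Aux

variable {S : Type*} [MeasurableSpace S]

open scoped Classical

set_option linter.unusedSectionVars false

/-- `drop m ω` is the trajectory `ω` with the first `m` entries removed. -/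
def drop (m : ℕ) (ω : ℕ → S) : ℕ → S := fun i => ω (i + m)

lemma measurable_drop (m : ℕ) : Measurable (drop (S := S) m) :=
  measurable_pi_lambda _ fun _ => measurable_pi_apply _

lemma drop_drop (a b : ℕ) (ω : ℕ → S) : drop a (drop b ω) = drop (a + b) ω := by
  funext i; simp [drop, Nat.add_assoc]

lemma measurable_consTraj (s : S) : Measurable (consTraj s) := by
  apply measurable_pi_lambda
  intro n
  cases n with
  | zero => exact measurable_const
  | succ n => exact measurable_pi_apply n

/-- `DD J A k` : there are `k` successive rounds of "visit `J`, then strictly later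
visit `A`". -/
def DD (J A : Set S) : ℕ → Set (ℕ → S)
  | 0 => Set.univ
  | k + 1 => {ω | ∃ n m, n < m ∧ ω n ∈ J ∧ ω m ∈ A ∧ drop m ω ∈ DD J A k}

lemma measurableSet_DD {J A : Set S} (hJ : MeasurableSet J) (hA : MeasurableSet A) :
    ∀ k, MeasurableSet (DD J A k)
  | 0 => MeasurableSet.univ
  | (k + 1) => by
    have hD := measurableSet_DD hJ hA k
    have heq : DD J A (k + 1) = ⋃ n, ⋃ m,
        {ω : ℕ → S | n < m ∧ ω n ∈ J ∧ ω m ∈ A ∧ drop m ω ∈ DD J A k} := by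
      ext ω; simp [DD]
    rw [heq]
    refine MeasurableSet.iUnion fun n => MeasurableSet.iUnion fun m => ?_
    by_cases h : n < m
    · have heq2 : {ω : ℕ → S | n < m ∧ ω n ∈ J ∧ ω m ∈ A ∧ drop m ω ∈ DD J A k}
          = ((fun ω : ℕ → S => ω n) ⁻¹' J) ∩ ((fun ω : ℕ → S => ω m) ⁻¹' A)
            ∩ (drop m ⁻¹' DD J A k) := by
        ext ω; simp only [mem_setOf_eq, mem_inter_iff, mem_preimage]; tauto
      rw [heq2]
      exact (((measurable_pi_apply n) hJ).inter ((measurable_pi_apply m) hA)).inter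
        ((measurable_drop m) hD)
    · have heq2 : {ω : ℕ → S | n < m ∧ ω n ∈ J ∧ ω m ∈ A ∧ drop m ω ∈ DD J A k} = ∅ := by
        ext ω; simp [h]
      rw [heq2]; exact MeasurableSet.empty

lemma DD_drop {J A : Set S} {k j : ℕ} {ω : ℕ → S} (h : drop j ω ∈ DD J A k) :
    ω ∈ DD J A k := by
  cases k with
  | zero => trivial
  | succ k =>
    obtain ⟨n, m, hnm, hn, hm, hd⟩ := h
    refine ⟨n + j, m + j, by omega, hn, hm, ?_⟩
    rwa [← drop_drop]

lemma measurableSet_cyl {C : ℕ → Set S} (hC : ∀ i, MeasurableSet (C i)) (n : ℕ) :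
    MeasurableSet {ω : ℕ → S | ∀ i ≤ n, ω i ∈ C i} := by
  have heq : {ω : ℕ → S | ∀ i ≤ n, ω i ∈ C i}
      = ⋂ i ∈ Finset.range (n + 1), (fun ω : ℕ → S => ω i) ⁻¹' C i := by
    ext ω; simp [Nat.lt_succ_iff]
  rw [heq]
  exact Finset.measurableSet_biInter _ fun i _ => (measurable_pi_apply i) (hC i)

variable {P : Kernel S S} [IsMarkovKernel P] {T : Kernel S (ℕ → S)} [IsMarkovKernel T]

lemma traj_apply (hT : IsTrajKernel P T) (s : S) {E : Set (ℕ → S)} (hE : MeasurableSet E) :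
    T s E = ∫⁻ u, T u (consTraj s ⁻¹' E) ∂(P s : Measure S) := by
  conv_lhs => rw [hT s]
  rw [Measure.map_apply (measurable_consTraj s) hE,
    Measure.bind_apply ((measurable_consTraj s) hE) T.measurable.aemeasurable]

lemma consTraj_mem_cyl_succ (s : S) (C : ℕ → Set S) (n : ℕ) (ω : ℕ → S) :
    (∀ i ≤ n + 1, consTraj s ω i ∈ C i) ↔ s ∈ C 0 ∧ ∀ i ≤ n, ω i ∈ C (i + 1) := by
  constructor
  · intro h; exact ⟨h 0 (by omega), fun i hi => h (i + 1) (by omega)⟩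
  · rintro ⟨h0, h⟩ i hi
    cases i with
    | zero => exact h0
    | succ i => exact h i (by omega)

lemma drop_succ_consTraj (s : S) (ω : ℕ → S) (n : ℕ) :
    drop (n + 1) (consTraj s ω) = drop n ω := rfl

lemma traj_cyl_zero (hT : IsTrajKernel P T) (C : ℕ → Set S) (hC : ∀ i, MeasurableSet (C i))
    {B : Set (ℕ → S)} (hB : MeasurableSet B) (s : S) :
    T s ({ω : ℕ → S | ∀ i ≤ 0, ω i ∈ C i} ∩ drop 0 ⁻¹' B)
      = if s ∈ C 0 then T s B else 0 := by
  have hmeas : MeasurableSet ({ω : ℕ → S | ∀ i ≤ 0, ω i ∈ C i} ∩ drop 0 ⁻¹' B) :=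
    (measurableSet_cyl hC 0).inter ((measurable_drop 0) hB)
  by_cases hs : s ∈ C 0
  · have hpre : consTraj s ⁻¹' ({ω : ℕ → S | ∀ i ≤ 0, ω i ∈ C i} ∩ drop 0 ⁻¹' B)
        = consTraj s ⁻¹' B := by
      ext ω'
      simp only [mem_preimage, mem_inter_iff, mem_setOf_eq]
      constructor
      · rintro ⟨_, h2⟩; exact h2
      · intro h
        refine ⟨fun i hi => ?_, h⟩
        · interval_cases i; exact hs
    rw [traj_apply hT s hmeas, hpre, if_pos hs, traj_apply hT s hB]
  · have hpre : consTraj s ⁻¹' ({ω : ℕ → S | ∀ i ≤ 0, ω i ∈ C i} ∩ drop 0 ⁻¹' B) = ∅ := by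
      ext ω'
      simp only [mem_preimage, mem_inter_iff, mem_setOf_eq, mem_empty_iff_false, iff_false,
        not_and]
      intro h1 _
      exact hs (h1 0 le_rfl)
    rw [traj_apply hT s hmeas, hpre, if_neg hs]
    simp

lemma traj_cyl_succ (hT : IsTrajKernel P T) (C : ℕ → Set S) (hC : ∀ i, MeasurableSet (C i))
    (n : ℕ) {B : Set (ℕ → S)} (hB : MeasurableSet B) (s : S) :
    T s ({ω : ℕ → S | ∀ i ≤ n + 1, ω i ∈ C i} ∩ drop (n + 1) ⁻¹' B)
      = if s ∈ C 0 then
          ∫⁻ u, T u ({ω : ℕ → S | ∀ i ≤ n, ω i ∈ C (i + 1)} ∩ drop n ⁻¹' B)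
            ∂(P s : Measure S)
        else 0 := by
  have hmeas : MeasurableSet ({ω : ℕ → S | ∀ i ≤ n + 1, ω i ∈ C i} ∩ drop (n + 1) ⁻¹' B) :=
    (measurableSet_cyl hC (n + 1)).inter ((measurable_drop (n + 1)) hB)
  by_cases hs : s ∈ C 0
  · have hpre : consTraj s ⁻¹' ({ω : ℕ → S | ∀ i ≤ n + 1, ω i ∈ C i} ∩ drop (n + 1) ⁻¹' B)
        = {ω : ℕ → S | ∀ i ≤ n, ω i ∈ C (i + 1)} ∩ drop n ⁻¹' B := by
      ext ω'
      simp only [mem_preimage, mem_inter_iff, mem_setOf_eq]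
      constructor
      · rintro ⟨h1, h2⟩
        exact ⟨((consTraj_mem_cyl_succ s C n ω').mp h1).2, h2⟩
      · rintro ⟨h1, h2⟩
        exact ⟨(consTraj_mem_cyl_succ s C n ω').mpr ⟨hs, h1⟩, h2⟩
    rw [traj_apply hT s hmeas, hpre, if_pos hs]
  · have hpre : consTraj s ⁻¹' ({ω : ℕ → S | ∀ i ≤ n + 1, ω i ∈ C i} ∩ drop (n + 1) ⁻¹' B)
        = ∅ := by
      ext ω'
      simp only [mem_preimage, mem_inter_iff, mem_setOf_eq, mem_empty_iff_false, iff_false,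
        not_and]
      intro h1 _
      exact hs (h1 0 (by omega))
    rw [traj_apply hT s hmeas, hpre, if_neg hs]
    simp

/-- Markov-property bound: if from every state of `C n` the probability of the
future event `B` is at most `c`, then the probability of the cylinder condition
together with `B` happening after time `n` is at most `c` times the probability of
the cylinder condition. -/
lemma MP (hT : IsTrajKernel P T) :
    ∀ (n : ℕ) (C : ℕ → Set S), (∀ i, MeasurableSet (C i)) →
      ∀ (B : Set (ℕ → S)), MeasurableSet B → ∀ (c : ℝ≥0∞), (∀ u ∈ C n, T u B ≤ c) →
      ∀ s : S, T s ({ω : ℕ → S | ∀ i ≤ n, ω i ∈ C i} ∩ drop n ⁻¹' B)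
        ≤ c * T s {ω : ℕ → S | ∀ i ≤ n, ω i ∈ C i} := by
  intro n
  induction n with
  | zero =>
    intro C hC B hB c hc s
    rw [traj_cyl_zero hT C hC hB s]
    by_cases hs : s ∈ C 0
    · rw [if_pos hs]
      have hone : T s {ω : ℕ → S | ∀ i ≤ 0, ω i ∈ C i} = 1 := by
        have h := traj_cyl_zero hT C hC MeasurableSet.univ s
        simp only [preimage_univ, inter_univ, if_pos hs, measure_univ] at h
        exact h
      rw [hone, mul_one]
      exact hc s hs
    · rw [if_neg hs]
      exact zero_le
  | succ n ih =>
    intro C hC B hB c hc s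
    rw [traj_cyl_succ hT C hC n hB s]
    by_cases hs : s ∈ C 0
    · rw [if_pos hs]
      have hstep : ∀ u, T u ({ω : ℕ → S | ∀ i ≤ n, ω i ∈ C (i + 1)} ∩ drop n ⁻¹' B)
          ≤ c * T u {ω : ℕ → S | ∀ i ≤ n, ω i ∈ C (i + 1)} :=
        fun u => ih (fun i => C (i + 1)) (fun i => hC (i + 1)) B hB c hc u
      have hcyl' : MeasurableSet {ω : ℕ → S | ∀ i ≤ n, ω i ∈ C (i + 1)} :=
        measurableSet_cyl (fun i => hC (i + 1)) n
      calc ∫⁻ u, T u ({ω : ℕ → S | ∀ i ≤ n, ω i ∈ C (i + 1)} ∩ drop n ⁻¹' B)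
              ∂(P s : Measure S)
          ≤ ∫⁻ u, c * T u {ω : ℕ → S | ∀ i ≤ n, ω i ∈ C (i + 1)} ∂(P s : Measure S) :=
            lintegral_mono hstep
        _ = c * ∫⁻ u, T u {ω : ℕ → S | ∀ i ≤ n, ω i ∈ C (i + 1)} ∂(P s : Measure S) :=
            lintegral_const_mul c (T.measurable_coe hcyl')
        _ = c * T s {ω : ℕ → S | ∀ i ≤ n + 1, ω i ∈ C i} := by
            have h := traj_cyl_succ hT C hC n MeasurableSet.univ s
            simp only [preimage_univ, inter_univ, if_pos hs] at h
            rw [h]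
    · rw [if_neg hs]
      exact zero_le

/-- `CF A m` : cylinder constraints for "first visit to `A` at a positive time is at `m`". -/
def CF (A : Set S) (m i : ℕ) : Set S := if i = 0 then Set.univ else if i < m then Aᶜ else A

lemma CF_measurable {A : Set S} (hA : MeasurableSet A) (m i : ℕ) :
    MeasurableSet (CF A m i) := by
  unfold CF; split_ifs
  exacts [MeasurableSet.univ, hA.compl, hA]

/-- `CE J n` : cylinder constraints for "first visit to `J` is at `n`". -/
def CE (J : Set S) (n i : ℕ) : Set S := if i < n then Jᶜ else J

lemma CE_measurable {J : Set S} (hJ : MeasurableSet J) (n i : ℕ) :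
    MeasurableSet (CE J n i) := by
  unfold CE; split_ifs
  exacts [hJ.compl, hJ]

lemma DD_bound (hT : IsTrajKernel P T) {J A : Set S} (hJ : MeasurableSet J)
    (hA : MeasurableSet A) {γ : ℝ≥0∞} (hbound : ∀ s ∈ J, T s (retEvent A) ≤ γ) :
    ∀ (k : ℕ) (s : S), T s (DD J A k) ≤ γ ^ k := by
  intro k
  induction k with
  | zero => intro s; simp [DD]
  | succ k ih =>
    classical
    -- the inner event: a positive-time visit to `A` followed by `DD J A k`
    set G : Set (ℕ → S) := {ω | ∃ m, 1 ≤ m ∧ ω m ∈ A ∧ drop m ω ∈ DD J A k} with hGdef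
    have hGmeas : MeasurableSet G := by
      have hGeq : G = ⋃ m, ((fun ω : ℕ → S => ω (m + 1)) ⁻¹' A
          ∩ drop (m + 1) ⁻¹' DD J A k) := by
        ext ω
        simp only [hGdef, mem_setOf_eq, mem_iUnion, mem_inter_iff, mem_preimage]
        constructor
        · rintro ⟨m, hm, h1, h2⟩
          refine ⟨m - 1, ?_⟩
          have hmm : m - 1 + 1 = m := by omega
          rw [hmm]; exact ⟨h1, h2⟩
        · rintro ⟨m, h1, h2⟩
          exact ⟨m + 1, by omega, h1, h2⟩
      rw [hGeq]
      exact MeasurableSet.iUnion fun m =>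
        ((measurable_pi_apply (m + 1)) hA).inter
          ((measurable_drop (m + 1)) (measurableSet_DD hJ hA k))
    -- Step B : inner bound
    have hinner : ∀ u ∈ J, T u G ≤ γ ^ (k + 1) := by
      intro u hu
      have hsub : G ⊆ ⋃ m, ({ω : ℕ → S | ∀ i ≤ m + 1, ω i ∈ CF A (m + 1) i}
          ∩ drop (m + 1) ⁻¹' DD J A k) := by
        rintro ω ⟨m, hm1, hmA, hmD⟩
        have hex : ∃ j, 1 ≤ j ∧ ω j ∈ A := ⟨m, hm1, hmA⟩
        set m₀ := Nat.find hex with hm₀def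
        obtain ⟨hm₀1, hm₀A⟩ := Nat.find_spec hex
        have hle : m₀ ≤ m := Nat.find_min' hex ⟨hm1, hmA⟩
        refine mem_iUnion.mpr ⟨m₀ - 1, ?_⟩
        have h1 : m₀ - 1 + 1 = m₀ := by omega
        rw [h1]
        constructor
        · intro i hi
          rcases Nat.eq_zero_or_pos i with h0 | hpos
          · simp [CF, h0]
          · by_cases hlt : i < m₀
            · have hni : ω i ∉ A := fun hiA => Nat.find_min hex hlt ⟨hpos, hiA⟩
              simp only [CF, if_neg (by omega : ¬ i = 0), if_pos hlt]
              exact hni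
            · have hieq : i = m₀ := le_antisymm hi (not_lt.mp hlt)
              rw [hieq]
              have hcf : CF A m₀ m₀ = A := by
                simp only [CF, if_neg (show ¬ m₀ = 0 by omega), if_neg (lt_irrefl m₀)]
              rw [hcf]
              exact hm₀A
        · show drop m₀ ω ∈ DD J A k
          have hdd : drop (m - m₀) (drop m₀ ω) ∈ DD J A k := by
            rw [drop_drop]
            have hmm : m - m₀ + m₀ = m := by omega
            rw [hmm]; exact hmD
          exact DD_drop hdd
      have hdisj : Pairwise (Function.onFun Disjoint
          (fun m => {ω : ℕ → S | ∀ i ≤ m + 1, ω i ∈ CF A (m + 1) i})) := by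
        have key : ∀ a b : ℕ, a < b → ∀ ω : ℕ → S,
            (∀ i ≤ a + 1, ω i ∈ CF A (a + 1) i) → (∀ i ≤ b + 1, ω i ∈ CF A (b + 1) i) →
            False := by
          intro a b hab ω h1 h2
          have hA1 : ω (a + 1) ∈ A := by
            have := h1 (a + 1) le_rfl
            simpa only [CF, if_neg (by omega : ¬ a + 1 = 0),
              if_neg (lt_irrefl (a + 1))] using this
          have hA2 : ω (a + 1) ∈ Aᶜ := by
            have := h2 (a + 1) (by omega)
            simpa only [CF, if_neg (by omega : ¬ a + 1 = 0),
              if_pos (by omega : a + 1 < b + 1)] using this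
          exact hA2 hA1
        intro a b hne
        rcases hne.lt_or_gt with hlt | hlt
        · exact disjoint_left.mpr fun ω hωa hωb => key a b hlt ω hωa hωb
        · exact disjoint_right.mpr fun ω hωa hωb => key b a hlt ω hωa hωb
      have hEmeas : ∀ m : ℕ,
          MeasurableSet {ω : ℕ → S | ∀ i ≤ m + 1, ω i ∈ CF A (m + 1) i} :=
        fun m => measurableSet_cyl (CF_measurable hA (m + 1)) (m + 1)
      have hret : (⋃ m, {ω : ℕ → S | ∀ i ≤ m + 1, ω i ∈ CF A (m + 1) i}) ⊆ retEvent A := by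
        rintro ω hω
        obtain ⟨m, hm⟩ := mem_iUnion.mp hω
        have := hm (m + 1) le_rfl
        refine ⟨m, ?_⟩
        simpa only [CF, if_neg (by omega : ¬ m + 1 = 0), if_neg (lt_irrefl (m + 1))]
          using this
      calc T u G
          ≤ T u (⋃ m, ({ω : ℕ → S | ∀ i ≤ m + 1, ω i ∈ CF A (m + 1) i}
              ∩ drop (m + 1) ⁻¹' DD J A k)) := measure_mono hsub
        _ ≤ ∑' m, T u ({ω : ℕ → S | ∀ i ≤ m + 1, ω i ∈ CF A (m + 1) i}
              ∩ drop (m + 1) ⁻¹' DD J A k) := measure_iUnion_le _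
        _ ≤ ∑' m, γ ^ k * T u {ω : ℕ → S | ∀ i ≤ m + 1, ω i ∈ CF A (m + 1) i} :=
            ENNReal.tsum_le_tsum fun m =>
              MP hT (m + 1) (CF A (m + 1)) (CF_measurable hA (m + 1)) (DD J A k)
                (measurableSet_DD hJ hA k) (γ ^ k) (fun v _ => ih v) u
        _ = γ ^ k * ∑' m, T u {ω : ℕ → S | ∀ i ≤ m + 1, ω i ∈ CF A (m + 1) i} :=
            ENNReal.tsum_mul_left
        _ = γ ^ k * T u (⋃ m, {ω : ℕ → S | ∀ i ≤ m + 1, ω i ∈ CF A (m + 1) i}) := by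
            rw [measure_iUnion hdisj hEmeas]
        _ ≤ γ ^ k * T u (retEvent A) := mul_le_mul_right (measure_mono hret) _
        _ ≤ γ ^ k * γ := mul_le_mul_right (hbound u hu) _
        _ = γ ^ (k + 1) := (pow_succ γ k).symm
    -- Step A : outer bound
    intro s
    have hsub2 : DD J A (k + 1) ⊆ ⋃ n, ({ω : ℕ → S | ∀ i ≤ n, ω i ∈ CE J n i}
        ∩ drop n ⁻¹' G) := by
      rintro ω ⟨n, m, hnm, hnJ, hmA, hmD⟩
      have hex : ∃ j, ω j ∈ J := ⟨n, hnJ⟩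
      set n₀ := Nat.find hex with hn₀def
      have hn₀J : ω n₀ ∈ J := Nat.find_spec hex
      have hle : n₀ ≤ n := Nat.find_min' hex hnJ
      refine mem_iUnion.mpr ⟨n₀, ?_, ?_⟩
      · intro i hi
        by_cases hlt : i < n₀
        · simp only [CE, if_pos hlt]
          exact Nat.find_min hex hlt
        · have hieq : i = n₀ := le_antisymm hi (not_lt.mp hlt)
          rw [hieq]
          have hce : CE J n₀ n₀ = J := by simp only [CE, if_neg (lt_irrefl n₀)]
          rw [hce]
          exact hn₀J
      · refine ⟨m - n₀, by omega, ?_, ?_⟩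
        · show ω (m - n₀ + n₀) ∈ A
          have hmm : m - n₀ + n₀ = m := by omega
          rw [hmm]; exact hmA
        · show drop (m - n₀) (drop n₀ ω) ∈ DD J A k
          rw [drop_drop]
          have hmm : m - n₀ + n₀ = m := by omega
          rw [hmm]; exact hmD
    have hdisj2 : Pairwise (Function.onFun Disjoint
        (fun n => {ω : ℕ → S | ∀ i ≤ n, ω i ∈ CE J n i})) := by
      have key : ∀ a b : ℕ, a < b → ∀ ω : ℕ → S,
          (∀ i ≤ a, ω i ∈ CE J a i) → (∀ i ≤ b, ω i ∈ CE J b i) → False := by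
        intro a b hab ω h1 h2
        have hJ1 : ω a ∈ J := by
          have := h1 a le_rfl
          simpa only [CE, if_neg (lt_irrefl a)] using this
        have hJ2 : ω a ∈ Jᶜ := by
          have := h2 a (by omega)
          simpa only [CE, if_pos hab] using this
        exact hJ2 hJ1
      intro a b hne
      rcases hne.lt_or_gt with hlt | hlt
      · exact disjoint_left.mpr fun ω hωa hωb => key a b hlt ω hωa hωb
      · exact disjoint_right.mpr fun ω hωa hωb => key b a hlt ω hωa hωb
    have hEmeas2 : ∀ n : ℕ, MeasurableSet {ω : ℕ → S | ∀ i ≤ n, ω i ∈ CE J n i} :=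
      fun n => measurableSet_cyl (CE_measurable hJ n) n
    calc T s (DD J A (k + 1))
        ≤ T s (⋃ n, ({ω : ℕ → S | ∀ i ≤ n, ω i ∈ CE J n i} ∩ drop n ⁻¹' G)) :=
          measure_mono hsub2
      _ ≤ ∑' n, T s ({ω : ℕ → S | ∀ i ≤ n, ω i ∈ CE J n i} ∩ drop n ⁻¹' G) :=
          measure_iUnion_le _
      _ ≤ ∑' n, γ ^ (k + 1) * T s {ω : ℕ → S | ∀ i ≤ n, ω i ∈ CE J n i} :=
          ENNReal.tsum_le_tsum fun n =>
            MP hT n (CE J n) (CE_measurable hJ n) G hGmeas (γ ^ (k + 1))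
              (fun v hv => hinner v (by simpa only [CE, if_neg (lt_irrefl n)] using hv)) s
      _ = γ ^ (k + 1) * ∑' n, T s {ω : ℕ → S | ∀ i ≤ n, ω i ∈ CE J n i} :=
          ENNReal.tsum_mul_left
      _ = γ ^ (k + 1) * T s (⋃ n, {ω : ℕ → S | ∀ i ≤ n, ω i ∈ CE J n i}) := by
          rw [measure_iUnion hdisj2 hEmeas2]
      _ ≤ γ ^ (k + 1) * 1 := mul_le_mul_right prob_le_one _
      _ = γ ^ (k + 1) := mul_one _

lemma infVisits_inter_subset_DD {J A : Set S} :
    ∀ k, infVisits J ∩ infVisits A ⊆ DD J A k := by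
  intro k
  induction k with
  | zero => intro ω _; trivial
  | succ k ih =>
    rintro ω ⟨h1, h2⟩
    obtain ⟨n, -, hnJ⟩ := h1 0
    obtain ⟨m, hm, hmA⟩ := h2 (n + 1)
    refine ⟨n, m, by omega, hnJ, hmA, ih ⟨?_, ?_⟩⟩
    · intro b
      obtain ⟨j, hj, hjJ⟩ := h1 (b + m)
      have hjm : j - m + m = j := by omega
      refine ⟨j - m, by omega, ?_⟩
      show ω (j - m + m) ∈ J
      rw [hjm]; exact hjJ
    · intro b
      obtain ⟨j, hj, hjA⟩ := h2 (b + m)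
      have hjm : j - m + m = j := by omega
      refine ⟨j - m, by omega, ?_⟩
      show ω (j - m + m) ∈ A
      rw [hjm]; exact hjA

end Aux

/-- if `sup_{s ∈ J} P_{δ_s}(σ_A < ∞) < 1`, i.e. there is `γ < 1` bounding
the return probability to `A` from every state of `J`, then for every initial
probability measure `μ`, `P_μ(Inf(J) ∩ Inf(A)) = 0`. -/
theorem infVisits_inter_infVisits_null
    {S : Type*} [MeasurableSpace S]
    (P : Kernel S S) [IsMarkovKernel P]
    (T : Kernel S (ℕ → S)) [IsMarkovKernel T] (hT : IsTrajKernel P T)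
    (A J : Set S) (hA : MeasurableSet A) (hJ : MeasurableSet J)
    (γ : ℝ≥0∞) (hγ : γ < 1) (hbound : ∀ s ∈ J, T s (retEvent A) ≤ γ)
    (μ : Measure S) [IsProbabilityMeasure μ] :
    (μ.bind (fun s => (T s : Measure (ℕ → S)))) (infVisits J ∩ infVisits A) = 0 := by
  have hbnd : ∀ k : ℕ,
      (μ.bind (fun s => (T s : Measure (ℕ → S)))) (infVisits J ∩ infVisits A) ≤ γ ^ k := by
    intro k
    have h1 : (μ.bind (fun s => (T s : Measure (ℕ → S)))) (infVisits J ∩ infVisits A)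
        ≤ (μ.bind (fun s => (T s : Measure (ℕ → S)))) (DD J A k) :=
      measure_mono (infVisits_inter_subset_DD k)
    have h2 : (μ.bind (fun s => (T s : Measure (ℕ → S)))) (DD J A k)
        = ∫⁻ s, T s (DD J A k) ∂μ :=
      Measure.bind_apply (measurableSet_DD hJ hA k) T.measurable.aemeasurable
    have h3 : ∫⁻ s, T s (DD J A k) ∂μ ≤ ∫⁻ _, γ ^ k ∂μ :=
      lintegral_mono fun s => DD_bound hT hJ hA hbound k s
    rw [lintegral_const, measure_univ, mul_one] at h3
    exact h1.trans (h2 ▸ h3)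
  have hlim : Tendsto (fun k : ℕ => γ ^ k) atTop (nhds 0) :=
    ENNReal.tendsto_pow_atTop_nhds_zero_of_lt_one hγ
  exact le_antisymm (ge_of_tendsto' hlim hbnd) zero_le
end

section
/- Almost-sure invariants for shift-invariant events: let L be a measurable shift-invariant event in the trajectory space of a time-homogeneous Markov chain with initial distribution μ and kernel P, and suppose P_μ(L) = 1. Then there exists a measurable region I ⊆ S such that (1) P_μ(I^ω) = 1, and (2) for every s ∈ S, P_{δ_s}((I^ω)ᶜ ∪ L) = 1. -/
open MeasureTheory ProbabilityTheory Filter Set ENNReal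

/-- almost-sure invariants for shift-invariant events.  If a measurable
shift-invariant event `L` satisfies `P_μ(L) = 1`, then there is a measurable region
`I ⊆ S` with `P_μ(I^ω) = 1` and such that from every state `s`,
`P_{δ_s}((I^ω)ᶜ ∪ L) = 1`. -/
theorem invariant_region_exists_almost_sure
    {S : Type*} [MeasurableSpace S]
    (P : Kernel S S) [IsMarkovKernel P]
    (T : Kernel S (ℕ → S)) [IsMarkovKernel T] (hT : IsTrajKernel P T)
    (μ : Measure S) [IsProbabilityMeasure μ]
    (L : Set (ℕ → S)) (hLmeas : MeasurableSet L) (hLinv : shift ⁻¹' L = L)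
    (hL1 : (μ.bind (fun s => (T s : Measure (ℕ → S)))) L = 1) :
    ∃ I : Set S, MeasurableSet I ∧
      (μ.bind (fun s => (T s : Measure (ℕ → S)))) (invEvent I) = 1 ∧
      (∀ s : S, T s ((invEvent I)ᶜ ∪ L) = 1) := by
  classical
  set f : S → ℝ≥0∞ := fun s => T s L with hf
  have hfmeas : Measurable f := T.measurable_coe hLmeas
  set I : Set S := f ⁻¹' {1} with hI
  have hImeas : MeasurableSet I := hfmeas (measurableSet_singleton 1)
  have hcons : ∀ s : S, Measurable (consTraj s) := by
    intro s
    apply measurable_pi_lambda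
    intro n
    cases n with
    | zero =>
        have : (fun ω : ℕ → S => consTraj s ω 0) = fun _ => s := rfl
        rw [this]; exact measurable_const
    | succ n =>
        have : (fun ω : ℕ → S => consTraj s ω (n + 1)) = fun ω => ω n := rfl
        rw [this]; exact measurable_pi_apply n
  have hrec : ∀ (s : S) (A : Set (ℕ → S)), MeasurableSet A →
      T s A = ∫⁻ u, T u (consTraj s ⁻¹' A) ∂ (P s) := by
    intro s A hA
    rw [hT s, Measure.map_apply (hcons s) hA,
        Measure.bind_apply ((hcons s) hA) T.measurable.aemeasurable]
  have hcons_pre : ∀ s : S, consTraj s ⁻¹' L = L := by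
    intro s
    conv_lhs => rw [← hLinv]
    rfl
  have hfs : ∀ s, f s = ∫⁻ u, f u ∂ (P s) := by
    intro s
    have := hrec s L hLmeas
    rw [hcons_pre s] at this
    exact this
  -- helper: integral 1 over prob measure forces a.e. membership in I
  have hae : ∀ (ν : Measure S), IsProbabilityMeasure ν →
      (∫⁻ s, f s ∂ν = 1) → ν Iᶜ = 0 := by
    intro ν hν hint
    have hle : ∀ s, f s ≤ 1 := fun s => prob_le_one
    have hsub : ∫⁻ s, (1 - f s) ∂ν = 0 := by
      rw [lintegral_sub hfmeas (by rw [hint]; exact one_ne_top)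
        (Filter.Eventually.of_forall hle), hint, lintegral_one, measure_univ, tsub_self]
    have h0 : ∀ᵐ s ∂ν, (1 : ℝ≥0∞) - f s = 0 :=
      (lintegral_eq_zero_iff (measurable_const.sub hfmeas)).mp hsub
    have h1 : ∀ᵐ s ∂ν, s ∈ I := by
      filter_upwards [h0] with s hs
      have : (1 : ℝ≥0∞) ≤ f s := tsub_eq_zero_iff_le.mp hs
      exact le_antisymm (hle s) this
    exact ae_iff.mp h1
  have hμbind : (μ.bind (fun s => (T s : Measure (ℕ → S)))) L = ∫⁻ s, f s ∂μ :=
    Measure.bind_apply hLmeas T.measurable.aemeasurable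
  have hμI : μ Iᶜ = 0 := hae μ inferInstance (by rw [← hμbind]; exact hL1)
  have hPsI : ∀ s ∈ I, P s Iᶜ = 0 := by
    intro s hs
    exact hae (P s) inferInstance (by rw [← hfs s]; exact hs)
  have hcoord : ∀ n : ℕ, MeasurableSet {ω : ℕ → S | ω n ∈ I} :=
    fun n => (measurable_pi_apply n) hImeas
  have hA : ∀ n : ℕ, ∀ s ∈ I, T s {ω | ω n ∈ I} = 1 := by
    intro n
    induction n with
    | zero =>
        intro s hs
        have hpre : consTraj s ⁻¹' {ω : ℕ → S | ω 0 ∈ I} = Set.univ := by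
          ext ω
          simp only [Set.mem_preimage, Set.mem_setOf_eq, Set.mem_univ, iff_true]
          exact hs
        rw [hrec s _ (hcoord 0), hpre]
        simp
    | succ n ih =>
        intro s hs
        have hpre : consTraj s ⁻¹' {ω : ℕ → S | ω (n + 1) ∈ I}
            = {ω : ℕ → S | ω n ∈ I} := rfl
        rw [hrec s _ (hcoord (n + 1)), hpre]
        have haeI : ∀ᵐ u ∂(P s), u ∈ I := by
          rw [ae_iff]
          exact hPsI s hs
        have : ∀ᵐ u ∂(P s), T u {ω : ℕ → S | ω n ∈ I} = 1 := by
          filter_upwards [haeI] with u hu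
          exact ih u hu
        rw [lintegral_congr_ae this]
        simp
  have hInvMeas : MeasurableSet (invEvent I) := by
    have : invEvent I = ⋂ n, {ω : ℕ → S | ω n ∈ I} := by
      ext ω; simp [invEvent]
    rw [this]
    exact MeasurableSet.iInter hcoord
  have hInv1 : ∀ s ∈ I, T s (invEvent I) = 1 := by
    intro s hs
    have hcompl : (invEvent I)ᶜ = ⋃ n, {ω : ℕ → S | ω n ∈ I}ᶜ := by
      ext ω; simp [invEvent]
    have hzero : T s (invEvent I)ᶜ = 0 := by
      rw [hcompl]
      exact measure_iUnion_null fun n =>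
        (prob_compl_eq_zero_iff (hcoord n)).mpr (hA n s hs)
    exact (prob_compl_eq_zero_iff hInvMeas).mp hzero
  refine ⟨I, hImeas, ?_, ?_⟩
  · rw [Measure.bind_apply hInvMeas T.measurable.aemeasurable]
    have haeI : ∀ᵐ s ∂μ, s ∈ I := by
      rw [ae_iff]; exact hμI
    have : ∀ᵐ s ∂μ, T s (invEvent I) = 1 := by
      filter_upwards [haeI] with s hs
      exact hInv1 s hs
    rw [lintegral_congr_ae this]
    simp
  · intro s
    by_cases hs : s ∈ I
    · have hTL : T s L = 1 := hs
      refine le_antisymm prob_le_one ?_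
      calc (1 : ℝ≥0∞) = T s L := hTL.symm
        _ ≤ T s ((invEvent I)ᶜ ∪ L) := measure_mono (Set.subset_union_right)
    · have h0 : T s {ω : ℕ → S | ω 0 ∈ I} = 0 := by
        have hpre : consTraj s ⁻¹' {ω : ℕ → S | ω 0 ∈ I} = ∅ := by
          ext ω
          simp only [Set.mem_preimage, Set.mem_setOf_eq, Set.mem_empty_iff_false, iff_false]
          exact hs
        rw [hrec s _ (hcoord 0), hpre]
        simp
      have hinv0 : T s (invEvent I) = 0 :=
        measure_mono_null (fun ω hω => hω 0) h0
      have hc : T s (invEvent I)ᶜ = 1 := by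
        rwa [prob_compl_eq_one_iff hInvMeas]
      refine le_antisymm prob_le_one ?_
      calc (1 : ℝ≥0∞) = T s (invEvent I)ᶜ := hc.symm
        _ ≤ T s ((invEvent I)ᶜ ∪ L) := measure_mono (Set.subset_union_left)
end

section
/- Soundness of supermartingale certificates for quantitative safety: let X ⊆ S be measurable, and suppose there exists a measurable function V : S → [0,∞) such that PV(s) ≤ V(s) for every s ∈ X, and V(s) ≥ 1 for every s ∉ X. Then for every initial probability distribution ξ on S, P_ξ(X^ω) ≥ 1 − ξV (where the right-hand side is interpreted as a lower bound even when ξV > 1). -/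
open MeasureTheory ProbabilityTheory Filter Set ENNReal

/-- soundness of supermartingale certificates for quantitative safety.
If `V : S → [0,∞)` is measurable with `PV(s) ≤ V(s)` on `X` and `V(s) ≥ 1` off `X`,
then `P_ξ(X^ω) ≥ 1 − ξV` for every initial distribution `ξ` (with `ℝ≥0∞`-truncated
subtraction, so the bound is trivial when `ξV > 1`). -/
theorem safety_certificate_sound
    {S : Type*} [MeasurableSpace S]
    (P : Kernel S S) [IsMarkovKernel P]
    (T : Kernel S (ℕ → S)) [IsMarkovKernel T] (hT : IsTrajKernel P T)
    (X : Set S) (hX : MeasurableSet X)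
    (V : S → ℝ) (hVmeas : Measurable V) (hVnonneg : ∀ s, 0 ≤ V s)
    (hdec : ∀ s ∈ X, ∫⁻ u, ENNReal.ofReal (V u) ∂(P s) ≤ ENNReal.ofReal (V s))
    (hout : ∀ s ∉ X, 1 ≤ V s)
    (ξ : Measure S) [IsProbabilityMeasure ξ] :
    1 - ∫⁻ s, ENNReal.ofReal (V s) ∂ξ ≤
      (ξ.bind (fun s => (T s : Measure (ℕ → S)))) (invEvent X) := by
  classical
  set μ := ξ.bind (fun s => (T s : Measure (ℕ → S))) with hμ
  set E : ℕ → Set (ℕ → S) := fun n => {ω | ∃ k < n, ω k ∉ X} with hE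
  have hEmeas : ∀ n, MeasurableSet (E n) := by
    intro n
    have : E n = ⋃ k ∈ Finset.range n, (fun ω : ℕ → S => ω k) ⁻¹' Xᶜ := by
      ext ω; simp [hE]
    rw [this]
    exact (Finset.range n).measurableSet_biUnion
      fun k _ => (measurable_pi_apply k) hX.compl
  have hcons : ∀ s : S, Measurable (consTraj s) := by
    intro s
    apply measurable_pi_lambda
    intro n
    cases n with
    | zero => exact measurable_const
    | succ m => exact measurable_pi_apply m
  have hTmeas : Measurable (fun u : S => (T u : Measure (ℕ → S))) := T.measurable
  have key : ∀ n s, T s (E n) ≤ ENNReal.ofReal (V s) := by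
    intro n
    induction n with
    | zero => intro s; simp [hE]
    | succ n ih =>
      intro s
      rw [hT s, Measure.map_apply (hcons s) (hEmeas (n + 1))]
      by_cases hs : s ∈ X
      · have hpre : consTraj s ⁻¹' E (n + 1) = E n := by
          ext ω
          constructor
          · rintro ⟨k, hk, hkX⟩
            cases k with
            | zero => exact absurd hs hkX
            | succ m => exact ⟨m, Nat.lt_of_succ_lt_succ hk, hkX⟩
          · rintro ⟨m, hm, hmX⟩
            exact ⟨m + 1, Nat.succ_lt_succ hm, hmX⟩
        rw [hpre, Measure.bind_apply (hEmeas n) hTmeas.aemeasurable]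
        calc ∫⁻ u, T u (E n) ∂(P s) ≤ ∫⁻ u, ENNReal.ofReal (V u) ∂(P s) :=
              lintegral_mono fun u => ih u
          _ ≤ ENNReal.ofReal (V s) := hdec s hs
      · have hpre : consTraj s ⁻¹' E (n + 1) = Set.univ := by
          ext ω
          simp only [Set.mem_preimage, Set.mem_univ, iff_true]
          exact ⟨0, Nat.succ_pos n, hs⟩
        rw [hpre, Measure.bind_apply MeasurableSet.univ hTmeas.aemeasurable]
        simp only [measure_univ, lintegral_one, measure_univ, mul_one]
        exact ENNReal.one_le_ofReal.mpr (hout s hs)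
  have hmono : Monotone E := by
    intro a b hab ω
    rintro ⟨k, hk, hkX⟩
    exact ⟨k, lt_of_lt_of_le hk hab, hkX⟩
  have hEscMeas : MeasurableSet (⋃ n, E n) := MeasurableSet.iUnion hEmeas
  have hbind : ∀ (A : Set (ℕ → S)), MeasurableSet A → μ A = ∫⁻ s, T s A ∂ξ := by
    intro A hA
    rw [hμ, Measure.bind_apply hA hTmeas.aemeasurable]
  have hEsc_le : μ (⋃ n, E n) ≤ ∫⁻ s, ENNReal.ofReal (V s) ∂ξ := by
    rw [hmono.directed_le.measure_iUnion]
    refine iSup_le fun n => ?_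
    rw [hbind (E n) (hEmeas n)]
    exact lintegral_mono fun s => key n s
  have hμuniv : μ Set.univ = 1 := by
    rw [hbind Set.univ MeasurableSet.univ]
    simp
  have hinv : invEvent X = (⋃ n, E n)ᶜ := by
    ext ω
    simp only [invEvent, Set.mem_compl_iff, Set.mem_iUnion, Set.mem_setOf_eq, hE]
    constructor
    · rintro h ⟨n, k, hk, hkX⟩
      exact hkX (h k)
    · intro h n
      by_contra hn
      exact h ⟨n + 1, n, Nat.lt_succ_self n, hn⟩
  have hcompl : μ (invEvent X) = 1 - μ (⋃ n, E n) := by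
    rw [hinv, measure_compl hEscMeas (((measure_mono (Set.subset_univ _)).trans hμuniv.le).trans_lt ENNReal.one_lt_top).ne]
    rw [hμuniv]
  rw [hcompl]
  exact tsub_le_tsub_left hEsc_le 1
end

section
/- Completeness of supermartingale certificates for quantitative safety: let X ⊆ S be measurable, let ξ be an initial probability distribution on S, and suppose P_ξ(X^ω) ≥ p for some p ∈ [0,1]. Then there exists a measurable function V : S → [0,∞) such that PV(s) ≤ V(s) for every s ∈ X, V(s) ≥ 1 for every s ∉ X, and ξV ≤ 1 − p. -/
open MeasureTheory ProbabilityTheory Filter Set ENNReal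

/-- completeness of supermartingale certificates for quantitative
safety.  If `P_ξ(X^ω) ≥ p` for some `p ∈ [0,1]`, then there is a measurable
`V : S → [0,∞)` with `PV(s) ≤ V(s)` on `X`, `V(s) ≥ 1` off `X`, and `ξV ≤ 1 − p`. -/
theorem safety_certificate_complete
    {S : Type*} [MeasurableSpace S]
    (P : Kernel S S) [IsMarkovKernel P]
    (T : Kernel S (ℕ → S)) [IsMarkovKernel T] (hT : IsTrajKernel P T)
    (X : Set S) (hX : MeasurableSet X)
    (ξ : Measure S) [IsProbabilityMeasure ξ]
    (p : ℝ) (hp0 : 0 ≤ p) (hp1 : p ≤ 1)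
    (hsafe : ENNReal.ofReal p ≤
      (ξ.bind (fun s => (T s : Measure (ℕ → S)))) (invEvent X)) :
    ∃ V : S → ℝ, Measurable V ∧ (∀ s, 0 ≤ V s) ∧
      (∀ s ∈ X, ∫⁻ u, ENNReal.ofReal (V u) ∂(P s) ≤ ENNReal.ofReal (V s)) ∧
      (∀ s ∉ X, 1 ≤ V s) ∧
      ∫⁻ s, ENNReal.ofReal (V s) ∂ξ ≤ ENNReal.ofReal (1 - p) := by
  have hE : MeasurableSet (invEvent X) := by
    have h : invEvent X = ⋂ n, (fun ω : ℕ → S => ω n) ⁻¹' X := by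
      ext ω; simp [invEvent]
    rw [h]
    exact MeasurableSet.iInter fun n => (measurable_pi_apply n) hX
  set f : S → ℝ≥0∞ := fun s => T s (invEvent X) with hfdef
  have hf : Measurable f := T.measurable_coe hE
  have hfle : ∀ s, f s ≤ 1 := fun s => prob_le_one
  have hfne : ∀ s, f s ≠ ∞ := fun s => (lt_of_le_of_lt (hfle s) one_lt_top).ne
  have hcons : ∀ s : S, Measurable (consTraj (S := S) s) := by
    intro s
    apply measurable_pi_lambda
    intro n
    cases n with
    | zero => exact measurable_const
    | succ n => exact measurable_pi_apply n
  -- value of f via the Markov recursion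
  have hkey : ∀ s : S, f s = ∫⁻ u, T u (consTraj s ⁻¹' invEvent X) ∂(P s) := by
    intro s
    show T s (invEvent X) = _
    rw [hT s, Measure.map_apply (hcons s) hE,
      Measure.bind_apply ((hcons s) hE) T.measurable.aemeasurable]
  have hpreX : ∀ s ∈ X, consTraj s ⁻¹' invEvent X = invEvent X := by
    intro s hs
    ext ω
    constructor
    · intro h n; exact h (n + 1)
    · intro h n
      cases n with
      | zero => exact hs
      | succ n => exact h n
  have hpreNX : ∀ s ∉ X, consTraj s ⁻¹' invEvent X = (∅ : Set (ℕ → S)) := by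
    intro s hs
    ext ω
    simp only [mem_preimage, mem_empty_iff_false, iff_false]
    intro h; exact hs (h 0)
  have hkeyX : ∀ s ∈ X, f s = ∫⁻ u, f u ∂(P s) := by
    intro s hs; rw [hkey s, hpreX s hs]
  have hkey0 : ∀ s ∉ X, f s = 0 := by
    intro s hs
    rw [hkey s, hpreNX s hs]
    simp
  -- the certificate
  have hofV : ∀ s, ENNReal.ofReal (1 - (f s).toReal) = 1 - f s := by
    intro s
    rw [ENNReal.ofReal_sub _ ENNReal.toReal_nonneg, ENNReal.ofReal_one,
      ENNReal.ofReal_toReal (hfne s)]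
  -- integral of 1 - f against any probability measure
  have hint : ∀ (μ : Measure S), IsProbabilityMeasure μ →
      ∫⁻ u, ENNReal.ofReal (1 - (f u).toReal) ∂μ = 1 - ∫⁻ u, f u ∂μ := by
    intro μ hμ
    simp_rw [hofV]
    rw [lintegral_sub hf (ne_top_of_le_ne_top one_ne_top
      ((lintegral_mono hfle).trans (by simp))) (Filter.Eventually.of_forall hfle)]
    simp
  refine ⟨fun s => 1 - (f s).toReal, measurable_const.sub hf.ennreal_toReal, ?_, ?_, ?_, ?_⟩
  · intro s
    show 0 ≤ 1 - (f s).toReal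
    have : (f s).toReal ≤ 1 := by
      rw [← ENNReal.toReal_one]
      exact ENNReal.toReal_mono one_ne_top (hfle s)
    linarith
  · intro s hs
    rw [hint (P s) inferInstance, hofV s, hkeyX s hs]
  · intro s hs
    show 1 ≤ 1 - (f s).toReal
    rw [hkey0 s hs]
    simp
  · rw [hint ξ inferInstance]
    have hb : (ξ.bind (fun s => (T s : Measure (ℕ → S)))) (invEvent X)
        = ∫⁻ u, f u ∂ξ := Measure.bind_apply hE T.measurable.aemeasurable
    rw [hb] at hsafe
    calc 1 - ∫⁻ u, f u ∂ξ ≤ 1 - ENNReal.ofReal p := tsub_le_tsub_left hsafe 1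
    _ = ENNReal.ofReal (1 - p) := by
        rw [ENNReal.ofReal_sub _ hp0, ENNReal.ofReal_one]
end
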